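/- arXiv:2111.00949 — 2 statements merged into one kernel-verified Lean document; each statement's English description precedes it below -/
import Mathlib

section
/- Suppose n ≥ 2 and r ≥ 2, and fix m ∈ {1, …, n}. Let T_m = ∑_{l=1}^r S_l ρ_m(l). Then E[T_m²] = (r(r² − 1)/12)·(1 + (r−2)/n), and in particular E[T_m²] ≤ (r³/12)·(1 + r/n). -/
open MeasureTheory Finset Real

noncomputable section

instance instMSPerm (r : ℕ) : MeasurableSpace (Equiv.Perm (Fin r)) := ⊤

/-- The joint law of `n` independent uniformly random permutations of `{1, …, r}`:
the uniform probability measure on the finite product space. -/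
def friedmanMeasure (n r : ℕ) : Measure (Fin n → Equiv.Perm (Fin r)) :=
  (PMF.uniformOfFintype (Fin n → Equiv.Perm (Fin r))).toMeasure

/-- `ρ_i(j) = π_i(j) - (r+1)/2`, where `π_i(j) ∈ {1, …, r}` is the rank assigned by the
`i`-th permutation to treatment `j` (a permutation of `Fin r` assigns values in `{0, …, r-1}`,
hence the `+ 1`). -/
def rho (n r : ℕ) (i : Fin n) (j : Fin r) (ω : Fin n → Equiv.Perm (Fin r)) : ℝ :=
  ((ω i j : ℕ) : ℝ) + 1 - ((r : ℝ) + 1) / 2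

/-- `S_j = (√12/√(r(r+1)n)) ∑_{i=1}^n ρ_i(j)`. -/
def Sstat (n r : ℕ) (j : Fin r) (ω : Fin n → Equiv.Perm (Fin r)) : ℝ :=
  Real.sqrt 12 / Real.sqrt ((r : ℝ) * ((r : ℝ) + 1) * (n : ℝ)) * ∑ i, rho n r i j ω

/-- Friedman's statistic `F_r = ∑_{j=1}^r S_j²`. -/
def friedman (n r : ℕ) (ω : Fin n → Equiv.Perm (Fin r)) : ℝ :=
  ∑ j, (Sstat n r j ω) ^ 2

/-- The chi-square distribution with `p` degrees of freedom: the Gamma distribution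
with shape `p/2` and rate `1/2`. -/
def chiSq (p : ℕ) : Measure ℝ := ProbabilityTheory.gammaMeasure ((p : ℝ) / 2) (1 / 2)

end

/-! Write `f` for the centred rank and `A(p, q) = ∑_l f(p l) f(q l)`, so that
`T_m = c ∑_i A(π_i, π_m)` with `c² = 12 / (r(r+1)n)`. The term `i = m` is the constant
`σ² = r(r²-1)/12`. For `i ≠ m`, averaging over `π_i` alone kills `A(π_i, π_m)`, because `π_i l`
is uniform on the ranks; hence all cross terms vanish. The covariance of `f(π l)` and `f(π l')`
is `σ²/r` for `l = l'` and `-σ²/(r(r-1))` otherwise, which gives `E[A(π_i, π_m)²] = σ⁴/(r-1)`.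
So `E[T_m²] = c² (σ⁴ + (n-1) σ⁴/(r-1))`. -/

namespace Equiv.Perm

variable {α M : Type*} [Fintype α] [DecidableEq α] [AddCommMonoid M]

theorem sum_apply_eq (g : α → M) (a b : α) :
    ∑ p : Perm α, g (p a) = ∑ p : Perm α, g (p b) := by
  rw [← _root_.Equiv.sum_comp (Equiv.mulRight (swap a b))]
  simp

theorem sum_apply_apply_eq (g : α → α → M) {a b c : α} (hb : b ≠ a) (hc : c ≠ a) :
    ∑ p : Perm α, g (p a) (p b) = ∑ p : Perm α, g (p a) (p c) := by
  rw [← _root_.Equiv.sum_comp (Equiv.mulRight (swap b c))]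
  simp [swap_apply_of_ne_of_ne hb.symm hc.symm]

theorem sum_apply_eq_factorial_mul_sum (g : α → ℝ) (a : α) :
    ∑ p : Perm α, g (p a) = (Fintype.card α - 1).factorial * ∑ x, g x := by
  have hcard : 0 < Fintype.card α := Fintype.card_pos_iff.mpr ⟨a⟩
  have key : (Fintype.card α : ℝ) * ∑ p : Perm α, g (p a)
      = (Fintype.card α).factorial * ∑ x, g x :=
    calc (Fintype.card α : ℝ) * ∑ p : Perm α, g (p a)
        = ∑ b : α, ∑ p : Perm α, g (p b) := by simp [sum_apply_eq g _ a]
      _ = ∑ p : Perm α, ∑ x, g x := by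
        rw [sum_comm]
        exact sum_congr rfl fun p _ => _root_.Equiv.sum_comp p g
      _ = _ := by simp [Fintype.card_perm]
  rw [← Nat.mul_factorial_pred hcard.ne', Nat.cast_mul, mul_assoc] at key
  exact mul_left_cancel₀ (by positivity) key

theorem sum_mul_apply_of_ne (f : α → ℝ) (hf : ∑ x, f x = 0) {a b : α} (hb : b ≠ a) :
    (Fintype.card α - 1 : ℝ) * ∑ p : Perm α, f (p a) * f (p b)
      = -((Fintype.card α - 1).factorial * ∑ x, f x ^ 2) := by
  have hrow : ∑ c, ∑ p : Perm α, f (p a) * f (p c) = 0 := by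
    rw [sum_comm]
    simp [← mul_sum, _root_.Equiv.sum_comp, hf]
  rw [← add_sum_erase _ _ (mem_univ a),
    sum_congr rfl fun c hc => sum_apply_apply_eq (fun x y => f x * f y)
      (ne_of_mem_erase hc) hb] at hrow
  rw [sum_const, card_erase_of_mem (mem_univ a), card_univ,
    nsmul_eq_mul, Nat.cast_pred (Fintype.card_pos_iff.mpr ⟨a⟩)] at hrow
  have hdiag := sum_apply_eq_factorial_mul_sum (fun x => f x ^ 2) a
  simp only [← sq] at hrow
  linarith

theorem sum_sq_sum_mul_apply [Nonempty α] (f u : α → ℝ) (hf : ∑ x, f x = 0)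
    (hu : ∑ x, u x = 0) :
    (Fintype.card α - 1 : ℝ) * ∑ p : Perm α, (∑ l, f (p l) * u l) ^ 2
      = (Fintype.card α).factorial * (∑ x, f x ^ 2) * ∑ x, u x ^ 2 := by
  set K := ((Fintype.card α - 1).factorial : ℝ) * ∑ x, f x ^ 2
  -- the covariance matrix of `f ∘ p` over all permutations `p` is a multiple of `r I - J`
  have hcov : ∀ l l', (Fintype.card α - 1 : ℝ) * ∑ p : Perm α, f (p l) * f (p l')
      = K * (Fintype.card α * (if l = l' then 1 else 0) - 1) := by
    intro l l'
    rcases eq_or_ne l' l with rfl | hl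
    · simp only [← sq, sum_apply_eq_factorial_mul_sum (fun x => f x ^ 2), if_pos]
      ring
    · rw [sum_mul_apply_of_ne f hf hl, if_neg hl.symm]
      ring
  calc (Fintype.card α - 1 : ℝ) * ∑ p : Perm α, (∑ l, f (p l) * u l) ^ 2
      = ∑ l, ∑ l', u l * u l' *
          ((Fintype.card α - 1 : ℝ) * ∑ p : Perm α, f (p l) * f (p l')) := by
        simp_rw [sq, sum_mul_sum, mul_sum]
        rw [sum_comm]
        refine sum_congr rfl fun l _ => ?_
        rw [sum_comm]
        refine sum_congr rfl fun l' _ => sum_congr rfl fun p _ => ?_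
        ring
    _ = K * (Fintype.card α * ∑ x, u x ^ 2 - (∑ x, u x) ^ 2) := by
        simp_rw [hcov, sq, sum_mul_sum, mul_sum, mul_sub, mul_ite, sum_sub_distrib]
        simp only [mul_one, mul_zero, sum_ite_eq, mem_univ, if_true, mul_sum]
        congr 1
        · exact sum_congr rfl fun _ _ => by ring
        · exact sum_congr rfl fun _ _ => sum_congr rfl fun _ _ => by ring
    _ = _ := by
        rw [hu, ← Nat.mul_factorial_pred Fintype.card_pos.ne']
        push_cast
        ring

end Equiv.Perm

open Function

section UniformProduct

variable {ι G : Type*} [Fintype ι] [DecidableEq ι] [Fintype G]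

theorem sum_sum_update_eq_card_smul {M : Type*} [AddCommMonoid M] (F : (ι → G) → M) (i : ι) :
    ∑ ω, ∑ x, F (update ω i x) = Fintype.card G • ∑ ω, F ω := by
  set e := Equiv.funSplitAt i G
  have hupdate : ∀ y x, update (e.symm y) i x = e.symm (x, y.2) := by
    intro y x
    ext j
    by_cases hj : j = i <;> simp [e, update, hj]
  rw [← e.symm.sum_comp, ← e.symm.sum_comp]
  simp only [hupdate, Fintype.sum_prod_type, sum_const, card_univ]
  rw [sum_comm]

theorem card_mul_sum_sq_eq {h : G → G → ℝ} {K : ℝ} (hK : ∀ q, ∑ p, h p q ^ 2 = K)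
    {i m : ι} (him : i ≠ m) :
    Fintype.card G * ∑ ω : ι → G, h (ω i) (ω m) ^ 2 = Fintype.card (ι → G) * K := by
  have key := sum_sum_update_eq_card_smul (fun ω => h (ω i) (ω m) ^ 2) i
  simp only [update_self, update_of_ne him.symm, hK, sum_const, card_univ,
    nsmul_eq_mul] at key
  exact key.symm

variable [Nonempty G]

theorem sum_mul_eq_zero_of_sum_eq_zero {h : G → G → ℝ} (h0 : ∀ q, ∑ p, h p q = 0)
    {i m : ι} (him : i ≠ m) {F : (ι → G) → ℝ} (hF : ∀ ω x, F (update ω i x) = F ω) :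
    ∑ ω, h (ω i) (ω m) * F ω = 0 := by
  have key := sum_sum_update_eq_card_smul (fun ω => h (ω i) (ω m) * F ω) i
  simp only [update_self, update_of_ne him.symm, hF, ← sum_mul, h0, zero_mul,
    sum_const_zero] at key
  exact (smul_eq_zero.mp key.symm).resolve_left Fintype.card_ne_zero

theorem sum_sq_add_sum_of_sum_eq_zero {h : G → G → ℝ} (h0 : ∀ q, ∑ p, h p q = 0) {K : ℝ}
    (hK : ∀ q, ∑ p, h p q ^ 2 = K) (m : ι) (a : ℝ) :
    ∑ ω : ι → G, (a + ∑ i ∈ univ.erase m, h (ω i) (ω m)) ^ 2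
      = Fintype.card (ι → G) * (a ^ 2 + (Fintype.card ι - 1) * K / Fintype.card G) := by
  have hG : (Fintype.card G : ℝ) ≠ 0 := Nat.cast_ne_zero.mpr Fintype.card_ne_zero
  have hlin : ∀ i ∈ univ.erase m, ∑ ω : ι → G, h (ω i) (ω m) = 0 := fun i hi => by
    simpa using sum_mul_eq_zero_of_sum_eq_zero h0 (ne_of_mem_erase hi) (F := fun _ => 1)
      (fun _ _ => rfl)
  have hquad : ∀ i ∈ univ.erase m, ∀ j ∈ univ.erase m,
      ∑ ω : ι → G, h (ω i) (ω m) * h (ω j) (ω m)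
        = if i = j then Fintype.card (ι → G) * K / Fintype.card G else 0 := by
    intro i hi j hj
    split_ifs with hij
    · subst hij
      rw [eq_div_iff hG, mul_comm, ← card_mul_sum_sq_eq hK (ne_of_mem_erase hi)]
      simp [sq]
    · exact sum_mul_eq_zero_of_sum_eq_zero h0 (ne_of_mem_erase hi)
        fun ω x => by simp [update_of_ne (Ne.symm hij), update_of_ne (ne_of_mem_erase hi).symm]
  calc ∑ ω : ι → G, (a + ∑ i ∈ univ.erase m, h (ω i) (ω m)) ^ 2
      = Fintype.card (ι → G) * a ^ 2 + 2 * a * ∑ i ∈ univ.erase m, ∑ ω : ι → G, h (ω i) (ω m)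
          + ∑ i ∈ univ.erase m, ∑ j ∈ univ.erase m,
              ∑ ω : ι → G, h (ω i) (ω m) * h (ω j) (ω m) := by
        simp only [add_sq, sq (∑ i ∈ _, _), sum_mul_sum, sum_add_distrib,
          sum_const, card_univ, nsmul_eq_mul, ← mul_sum]
        rw [sum_comm (s := univ), sum_comm (s := univ)]
        congr 1
        refine sum_congr rfl fun i _ => ?_
        simp only [mul_sum]
        exact sum_comm
    _ = _ := by
        rw [sum_eq_zero hlin, sum_congr rfl fun i hi => sum_congr rfl (hquad i hi),
          sum_congr rfl fun i hi => (sum_ite_eq _ i _).trans (if_pos hi),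
          sum_const, card_erase_of_mem (mem_univ m), card_univ,
          nsmul_eq_mul, Nat.cast_pred (Fintype.card_pos_iff.mpr ⟨m⟩)]
        ring

end UniformProduct

theorem sum_range_add_one_sub (N : ℕ) (c : ℝ) :
    ∑ k ∈ range N, ((k : ℝ) + 1 - c) = N * (N + 1) / 2 - N * c := by
  induction N with
  | zero => simp
  | succ N ih => rw [sum_range_succ, ih]; push_cast; ring

theorem sum_range_add_one_sub_sq (N : ℕ) (c : ℝ) :
    ∑ k ∈ range N, ((k : ℝ) + 1 - c) ^ 2
      = N * (N + 1) * (2 * N + 1) / 6 - c * N * (N + 1) + N * c ^ 2 := by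
  induction N with
  | zero => simp
  | succ N ih => rw [sum_range_succ, ih]; push_cast; ring

noncomputable def centredRank (r : ℕ) (k : Fin r) : ℝ := (k : ℕ) + 1 - ((r : ℝ) + 1) / 2

theorem sum_centredRank (r : ℕ) : ∑ k, centredRank r k = 0 := by
  simp only [centredRank]
  rw [Fin.sum_univ_eq_sum_range (fun k => (k : ℝ) + 1 - ((r : ℝ) + 1) / 2),
    sum_range_add_one_sub]
  ring

theorem sum_centredRank_sq (r : ℕ) : ∑ k, centredRank r k ^ 2 = r * ((r : ℝ) ^ 2 - 1) / 12 := by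
  simp only [centredRank]
  rw [Fin.sum_univ_eq_sum_range (fun k => ((k : ℝ) + 1 - ((r : ℝ) + 1) / 2) ^ 2),
    sum_range_add_one_sub_sq]
  ring

open Equiv

noncomputable def rankInner (r : ℕ) (p q : Perm (Fin r)) : ℝ :=
  ∑ l, centredRank r (p l) * centredRank r (q l)

theorem rankInner_self (r : ℕ) (q : Perm (Fin r)) :
    rankInner r q q = r * ((r : ℝ) ^ 2 - 1) / 12 := by
  simp only [rankInner, ← sq, Equiv.sum_comp q (fun k => centredRank r k ^ 2), sum_centredRank_sq]

theorem sum_rankInner_left (r : ℕ) (q : Perm (Fin r)) : ∑ p, rankInner r p q = 0 := by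
  simp only [rankInner]
  rw [sum_comm]
  refine sum_eq_zero fun l _ => ?_
  simp [← sum_mul, Perm.sum_apply_eq_factorial_mul_sum (centredRank r), sum_centredRank]

theorem sum_rankInner_sq (r : ℕ) (hr : 2 ≤ r) (q : Perm (Fin r)) :
    ∑ p, rankInner r p q ^ 2 = r.factorial * (r * ((r : ℝ) ^ 2 - 1) / 12) ^ 2 / (r - 1) := by
  have : Nonempty (Fin r) := ⟨⟨0, by omega⟩⟩
  have key := Perm.sum_sq_sum_mul_apply (centredRank r) (fun l => centredRank r (q l))
    (sum_centredRank r) (by rw [Equiv.sum_comp q (centredRank r), sum_centredRank])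
  rw [Equiv.sum_comp q (fun k => centredRank r k ^ 2), sum_centredRank_sq, Fintype.card_fin] at key
  have hr2 : (2 : ℝ) ≤ r := by exact_mod_cast hr
  have hr1 : (r : ℝ) - 1 ≠ 0 := by linarith
  rw [eq_div_iff hr1]
  simp only [rankInner]
  linear_combination key

theorem rho_eq_centredRank (n r : ℕ) (i : Fin n) (j : Fin r) (ω : Fin n → Perm (Fin r)) :
    rho n r i j ω = centredRank r (ω i j) :=
  rfl

theorem sum_Sstat_mul_rho (n r : ℕ) (m : Fin n) (ω : Fin n → Perm (Fin r)) :
    ∑ l, Sstat n r l ω * rho n r m l ω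
      = √12 / √((r : ℝ) * ((r : ℝ) + 1) * (n : ℝ))
        * (r * ((r : ℝ) ^ 2 - 1) / 12 + ∑ i ∈ univ.erase m, rankInner r (ω i) (ω m)) := by
  rw [← rankInner_self r (ω m), add_sum_erase _ (fun i => rankInner r (ω i) (ω m)) (mem_univ m)]
  simp only [Sstat, rankInner, rho_eq_centredRank, mul_sum, sum_mul, mul_assoc]
  exact sum_comm

theorem integral_friedmanMeasure (n r : ℕ) (f : (Fin n → Perm (Fin r)) → ℝ) :
    ∫ ω, f ω ∂friedmanMeasure n r = (∑ ω, f ω) / (r.factorial : ℝ) ^ n := by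
  simp [friedmanMeasure, PMF.integral_eq_sum, Fintype.card_perm, div_eq_inv_mul, mul_sum]

theorem mul_one_add_div_le (r n : ℝ) (hr : 1 ≤ r) (hn : 0 < n) :
    r * (r ^ 2 - 1) / 12 * (1 + (r - 2) / n) ≤ r ^ 3 / 12 * (1 + r / n) := by
  rw [← sub_nonneg]
  have hdiff : r ^ 3 / 12 * (1 + r / n) - r * (r ^ 2 - 1) / 12 * (1 + (r - 2) / n)
      = r * (n + 2 * r ^ 2 + r - 2) / (12 * n) := by
    field_simp
    ring
  rw [hdiff]
  apply div_nonneg <;> nlinarith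

theorem Tm_second_moment_general (n r : ℕ) (hr : 2 ≤ r) (m : Fin n) :
    (∫ ω, (∑ l, Sstat n r l ω * rho n r m l ω) ^ 2 ∂(friedmanMeasure n r)
      = (r : ℝ) * ((r : ℝ) ^ 2 - 1) / 12 * (1 + ((r : ℝ) - 2) / (n : ℝ))) ∧
    ∫ ω, (∑ l, Sstat n r l ω * rho n r m l ω) ^ 2 ∂(friedmanMeasure n r)
      ≤ (r : ℝ) ^ 3 / 12 * (1 + (r : ℝ) / (n : ℝ)) := by
  have hn : (0 : ℝ) < n := Nat.cast_pos.mpr m.pos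
  have hr2 : (2 : ℝ) ≤ r := by exact_mod_cast hr
  have hsecond : ∫ ω, (∑ l, Sstat n r l ω * rho n r m l ω) ^ 2 ∂(friedmanMeasure n r)
      = (r : ℝ) * ((r : ℝ) ^ 2 - 1) / 12 * (1 + ((r : ℝ) - 2) / (n : ℝ)) := by
    simp_rw [integral_friedmanMeasure, sum_Sstat_mul_rho, mul_pow, ← mul_sum,
      sum_sq_add_sum_of_sum_eq_zero (sum_rankInner_left r) (sum_rankInner_sq r hr) m]
    rw [div_pow, sq_sqrt (by norm_num), sq_sqrt (by positivity)]
    simp only [Fintype.card_fun, Fintype.card_perm, Fintype.card_fin]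
    push_cast
    have : (r : ℝ) - 1 ≠ 0 := by linarith
    field_simp
    ring
  exact ⟨hsecond, hsecond ▸ mul_one_add_div_le r n (by linarith) hn⟩

/-- **Lemma 3.3, (3.2) (Gaunt–Reinert).** For `n, r ≥ 2` and `T_m = ∑_{l=1}^r S_l ρ_m(l)`,
`E[T_m²] = (r(r²−1)/12)(1 + (r−2)/n)`, and in particular `E[T_m²] ≤ (r³/12)(1 + r/n)`. -/
theorem Tm_second_moment (n r : ℕ) (hn : 2 ≤ n) (hr : 2 ≤ r) (m : Fin n) :
    (∫ ω, (∑ l, Sstat n r l ω * rho n r m l ω) ^ 2 ∂(friedmanMeasure n r)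
      = (r : ℝ) * ((r : ℝ) ^ 2 - 1) / 12 * (1 + ((r : ℝ) - 2) / (n : ℝ))) ∧
    ∫ ω, (∑ l, Sstat n r l ω * rho n r m l ω) ^ 2 ∂(friedmanMeasure n r)
      ≤ (r : ℝ) ^ 3 / 12 * (1 + (r : ℝ) / (n : ℝ)) :=
  Tm_second_moment_general n r hr m
end

section
/- Suppose r ≥ 2 and n ≥ 1. Then for every j ∈ {1, …, r}, E[S_j⁶] = 3(r−1)·(35n²(r²−1)² − 42n(r⁴−1) + 16(r⁴ + r² + 1))/(7 r³ (r+1)² n²), and in particular E[S_j⁶] ≤ 15. -/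
open MeasureTheory Finset Real

/-!
`S_j` is a rescaled sum of `n` independent copies of the centred rank `X = π(j) - (r+1)/2`,
and `π(j)` is uniform on `{1, …, r}`. Since `X` is symmetric, all odd moments of `X`, and then of
the sum `T`, vanish; expanding `(X + T)⁶` one summand at a time gives
`E T⁶ = n E X⁶ + 15 n(n-1) E X² E X⁴ + 15 n(n-1)(n-2) (E X²)³`.
The even moments of `X` are power sums of the centred ranks, which satisfy a two-step recursion:
the centred ranks for `r + 2` are those for `r` together with the two extreme values `±(r+1)/2`.
-/

open scoped BigOperators

section IIDSums
variable {α : Type*} [Fintype α] (g : α → ℝ)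

theorem expect_sum_pow_succ (n k : ℕ) :
    𝔼 ω : Fin (n + 1) → α, (∑ i, g (ω i)) ^ k
      = ∑ m ∈ range (k + 1), (𝔼 a, g a ^ m) * (𝔼 ω : Fin n → α, (∑ i, g (ω i)) ^ (k - m))
          * k.choose m := by
  rw [← Fintype.expect_equiv (Fin.consEquiv fun _ ↦ α)
    (fun p ↦ (g p.1 + ∑ i, g (p.2 i)) ^ k) _ fun p ↦ by simp [Fin.sum_univ_succ],
    ← univ_product_univ, expect_product' univ univ fun a (ω : Fin n → α) ↦ (g a + ∑ i, g (ω i)) ^ k]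
  simp_rw [add_pow, expect_sum_comm, ← expect_mul, ← mul_expect, ← expect_mul]

variable {g}

theorem expect_sum_pow_eq_zero_of_odd (hodd : ∀ m, Odd m → 𝔼 a, g a ^ m = 0) (n : ℕ) {k : ℕ}
    (hk : Odd k) : 𝔼 ω : Fin n → α, (∑ i, g (ω i)) ^ k = 0 := by
  induction n generalizing k with
  | zero => simp [hk.pos.ne']
  | succ n ih =>
    rw [expect_sum_pow_succ]
    refine sum_eq_zero fun m hm ↦ ?_
    rcases Nat.even_or_odd m with hm' | hm'
    · rw [ih (Nat.Odd.sub_even (Nat.lt_succ_iff.1 (mem_range.1 hm)) hk hm'), mul_zero, zero_mul]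
    · rw [hodd m hm', zero_mul, zero_mul]

variable [Nonempty α] (hodd : ∀ m, Odd m → 𝔼 a, g a ^ m = 0)
include hodd

theorem expect_sum_sq (n : ℕ) :
    𝔼 ω : Fin n → α, (∑ i, g (ω i)) ^ 2 = n * 𝔼 a, g a ^ 2 := by
  induction n with
  | zero => simp
  | succ n ih =>
    rw [expect_sum_pow_succ]
    simp only [sum_range_succ, sum_range_zero, Nat.reduceSub, ih, hodd 1 odd_one,
      expect_sum_pow_eq_zero_of_odd hodd n odd_one, pow_zero, Fintype.expect_const, Nat.choose]
    push_cast
    ring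

theorem expect_sum_pow_four (n : ℕ) :
    𝔼 ω : Fin n → α, (∑ i, g (ω i)) ^ 4
      = n * 𝔼 a, g a ^ 4 + 3 * n * (n - 1) * (𝔼 a, g a ^ 2) ^ 2 := by
  induction n with
  | zero => simp
  | succ n ih =>
    have h3 : Odd 3 := by decide
    rw [expect_sum_pow_succ]
    simp only [sum_range_succ, sum_range_zero, Nat.reduceSub, ih, expect_sum_sq hodd,
      hodd 1 odd_one, hodd 3 h3, expect_sum_pow_eq_zero_of_odd hodd n odd_one,
      expect_sum_pow_eq_zero_of_odd hodd n h3, pow_zero, Fintype.expect_const, Nat.choose]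
    push_cast
    ring

theorem expect_sum_pow_six (n : ℕ) :
    𝔼 ω : Fin n → α, (∑ i, g (ω i)) ^ 6
      = n * 𝔼 a, g a ^ 6 + 15 * n * (n - 1) * (𝔼 a, g a ^ 2) * (𝔼 a, g a ^ 4)
        + 15 * n * (n - 1) * (n - 2) * (𝔼 a, g a ^ 2) ^ 3 := by
  induction n with
  | zero => simp
  | succ n ih =>
    have h3 : Odd 3 := by decide
    have h5 : Odd 5 := by decide
    rw [expect_sum_pow_succ]
    simp only [sum_range_succ, sum_range_zero, Nat.reduceSub, ih, expect_sum_sq hodd,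
      expect_sum_pow_four hodd, hodd 1 odd_one, hodd 3 h3, hodd 5 h5,
      expect_sum_pow_eq_zero_of_odd hodd n odd_one, expect_sum_pow_eq_zero_of_odd hodd n h3,
      expect_sum_pow_eq_zero_of_odd hodd n h5, pow_zero, Fintype.expect_const, Nat.choose]
    push_cast
    ring

end IIDSums

theorem Equiv.Perm.expect_comp_apply {β M : Type*} [Fintype β] [DecidableEq β] [AddCommMonoid M]
    [Module ℚ≥0 M] (j : β) (f : β → M) : 𝔼 σ : Equiv.Perm β, f (σ j) = 𝔼 b, f b := by
  have : Nonempty β := ⟨j⟩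
  have hj : ∀ b, 𝔼 σ : Equiv.Perm β, f (σ j) = 𝔼 σ : Equiv.Perm β, f (σ b) := fun b ↦
    Fintype.expect_equiv (Equiv.mulRight (Equiv.swap j b)) _ _ fun σ ↦ by simp
  calc 𝔼 σ : Equiv.Perm β, f (σ j) = 𝔼 b, 𝔼 σ : Equiv.Perm β, f (σ b) := by
        simp_rw [← hj, Fintype.expect_const]
    _ = 𝔼 σ : Equiv.Perm β, 𝔼 b, f (σ b) := Finset.expect_comm _ _ _
    _ = 𝔼 b, f b := by
        simp_rw [fun σ : Equiv.Perm β ↦ Fintype.expect_equiv σ (fun b ↦ f (σ b)) f fun _ ↦ rfl,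
          Fintype.expect_const]

noncomputable def centeredPowSum (r m : ℕ) : ℝ := ∑ v ∈ range r, ((v : ℝ) + 1 - (r + 1) / 2) ^ m

theorem centeredPowSum_add_two (r m : ℕ) :
    centeredPowSum (r + 2) m
      = centeredPowSum r m + ((r + 1) / 2 : ℝ) ^ m + (-((r + 1) / 2) : ℝ) ^ m := by
  simp only [centeredPowSum, sum_range_succ' _ (r + 1), sum_range_succ _ r]
  push_cast
  simp only [show ∀ v : ℝ, v + 1 + 1 - (r + 2 + 1) / 2 = v + 1 - (r + 1) / 2 from fun v ↦ by ring]
  ring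

theorem centeredPowSum_of_odd {m : ℕ} (hm : Odd m) (r : ℕ) : centeredPowSum r m = 0 := by
  induction r using Nat.twoStepInduction with
  | zero => simp [centeredPowSum]
  | one => simp [centeredPowSum, hm.pos.ne']
  | more r ih _ => rw [centeredPowSum_add_two, ih, hm.neg_pow]; ring

theorem centeredPowSum_two (r : ℕ) : centeredPowSum r 2 = r * (r ^ 2 - 1) / 12 := by
  induction r using Nat.twoStepInduction with
  | zero => simp [centeredPowSum]
  | one => simp [centeredPowSum]
  | more r ih _ => rw [centeredPowSum_add_two, ih]; push_cast; ring

theorem centeredPowSum_four (r : ℕ) :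
    centeredPowSum r 4 = r * (r ^ 2 - 1) * (3 * r ^ 2 - 7) / 240 := by
  induction r using Nat.twoStepInduction with
  | zero => simp [centeredPowSum]
  | one => simp [centeredPowSum]
  | more r ih _ => rw [centeredPowSum_add_two, ih]; push_cast; ring

theorem centeredPowSum_six (r : ℕ) :
    centeredPowSum r 6 = r * (r ^ 2 - 1) * (3 * r ^ 4 - 18 * r ^ 2 + 31) / 1344 := by
  induction r using Nat.twoStepInduction with
  | zero => simp [centeredPowSum]
  | one => simp [centeredPowSum]
  | more r ih _ => rw [centeredPowSum_add_two, ih]; push_cast; ring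

theorem expect_perm_centered_rank_pow {r : ℕ} (j : Fin r) (m : ℕ) :
    𝔼 σ : Equiv.Perm (Fin r), (((σ j : ℕ) : ℝ) + 1 - (r + 1) / 2) ^ m = centeredPowSum r m / r := by
  rw [Equiv.Perm.expect_comp_apply j (fun v : Fin r ↦ (((v : ℕ) : ℝ) + 1 - (r + 1) / 2) ^ m),
    Fintype.expect_eq_sum_div_card, Fin.sum_univ_eq_sum_range (fun v ↦ ((v : ℝ) + 1 - (r + 1) / 2) ^ m),
    Fintype.card_fin, centeredPowSum]

theorem PMF.integral_uniformOfFintype {α : Type*} [Fintype α] [Nonempty α] [MeasurableSpace α]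
    [MeasurableSingletonClass α] (f : α → ℝ) :
    ∫ a, f a ∂(PMF.uniformOfFintype α).toMeasure = 𝔼 a, f a := by
  rw [PMF.integral_eq_sum, Fintype.expect_eq_sum_div_card, sum_div]
  simp [div_eq_inv_mul]

theorem sixth_moment_formula_le_fifteen {x y : ℝ} (hx : 2 ≤ x) (hy : 1 ≤ y) :
    3 * (x - 1) * (35 * y ^ 2 * (x ^ 2 - 1) ^ 2 - 42 * y * (x ^ 4 - 1)
      + 16 * (x ^ 4 + x ^ 2 + 1)) / (7 * x ^ 3 * (x + 1) ^ 2 * y ^ 2) ≤ 15 := by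
  have hx0 : 0 < x := by linarith
  have hy0 : 0 < y := by linarith
  rw [div_le_iff₀ (by positivity)]
  nlinarith [sq_nonneg (x - 2), sq_nonneg (y - 1), sq_nonneg (x * y - 1), sq_nonneg x,
    sq_nonneg y, mul_pos hx0 hy0, sq_nonneg ((x - 1) * y), sq_nonneg ((x - 2) * y),
    mul_nonneg (sub_nonneg.2 hx) (sub_nonneg.2 hy)]

theorem integral_Sstat_pow_six (n r : ℕ) (j : Fin r) :
    ∫ ω, (Sstat n r j ω) ^ 6 ∂(friedmanMeasure n r)
      = 3 * ((r : ℝ) - 1) * (35 * (n : ℝ) ^ 2 * ((r : ℝ) ^ 2 - 1) ^ 2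
          - 42 * (n : ℝ) * ((r : ℝ) ^ 4 - 1) + 16 * ((r : ℝ) ^ 4 + (r : ℝ) ^ 2 + 1))
        / (7 * (r : ℝ) ^ 3 * ((r : ℝ) + 1) ^ 2 * (n : ℝ) ^ 2) := by
  set g : Equiv.Perm (Fin r) → ℝ := fun σ ↦ ((σ j : ℕ) : ℝ) + 1 - (r + 1) / 2
  have hodd : ∀ m, Odd m → 𝔼 σ, g σ ^ m = 0 := fun m hm ↦ by
    rw [expect_perm_centered_rank_pow, centeredPowSum_of_odd hm, zero_div]
  have hsqrt (x : ℝ) (hx : 0 ≤ x) : √x ^ 6 = x ^ 3 := by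
    rw [show 6 = 2 * 3 by rfl, pow_mul, Real.sq_sqrt hx]
  have hr : (r : ℝ) ≠ 0 := Nat.cast_ne_zero.2 j.pos.ne'
  rw [friedmanMeasure, PMF.integral_uniformOfFintype]
  simp_rw [Sstat, mul_pow, ← mul_expect,
    show ∀ ω, ∑ i, rho n r i j ω = ∑ i, g (ω i) from fun _ ↦ rfl]
  rw [expect_sum_pow_six hodd, expect_perm_centered_rank_pow, expect_perm_centered_rank_pow,
    expect_perm_centered_rank_pow, centeredPowSum_two, centeredPowSum_four, centeredPowSum_six,
    div_pow, hsqrt _ (by norm_num), hsqrt _ (by positivity)]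
  rcases eq_or_ne n 0 with rfl | hn
  · simp
  field_simp
  ring

/-- **Lemma A.1 (Gaunt–Reinert).** For `r ≥ 2`, `n ≥ 1` and every `j`,
`E[S_j⁶] = 3(r−1)(35n²(r²−1)² − 42n(r⁴−1) + 16(r⁴+r²+1))/(7r³(r+1)²n²)`, and in
particular `E[S_j⁶] ≤ 15`. -/
theorem Sstat_sixth_moment (n r : ℕ) (hr : 2 ≤ r) (hn : 1 ≤ n) (j : Fin r) :
    (∫ ω, (Sstat n r j ω) ^ 6 ∂(friedmanMeasure n r)
      = 3 * ((r : ℝ) - 1) * (35 * (n : ℝ) ^ 2 * ((r : ℝ) ^ 2 - 1) ^ 2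
          - 42 * (n : ℝ) * ((r : ℝ) ^ 4 - 1) + 16 * ((r : ℝ) ^ 4 + (r : ℝ) ^ 2 + 1))
        / (7 * (r : ℝ) ^ 3 * ((r : ℝ) + 1) ^ 2 * (n : ℝ) ^ 2)) ∧
    ∫ ω, (Sstat n r j ω) ^ 6 ∂(friedmanMeasure n r) ≤ 15 := by
  rw [integral_Sstat_pow_six]
  exact ⟨rfl, sixth_moment_formula_le_fifteen (by exact_mod_cast hr) (by exact_mod_cast hn)⟩
end
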